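/- Let x be a positive natural number and let α : Fin (x·(x+1)) → ℕ be an antitone (monotonically non-increasing) sequence. Then either α takes at least x distinct values, or there exists an index i with i + x < x·(x+1) such that α i = α (i + x) (i.e., there are x+1 consecutive equal entries). -/

import Mathlib

/-! If `α` never agrees with its value `x` places later, antitonicity forces it to strictly
decrease along the grid `0, x, 2x, …, x²`, so it already takes `x + 1` distinct values there. -/

open Finset

theorem Antitone.lt_of_le_of_le_of_ne {α β : Type*} [Preorder α] [PartialOrder β] {f : α → β}
    (hf : Antitone f) {a b c : α} (hab : a ≤ b) (hbc : b ≤ c) (hne : f a ≠ f b) : f c < f a :=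
  (hf hbc).trans_lt ((hf hab).lt_of_ne hne.symm)

theorem Antitone.succ_le_card_image_of_ne_add {β : Type*} [LinearOrder β] {n m d : ℕ}
    {f : Fin n → β} (hf : Antitone f) (hmd : m * d < n)
    (hne : ∀ i (h : i + d < n), f ⟨i, by omega⟩ ≠ f ⟨i + d, h⟩) :
    m + 1 ≤ #(univ.image f) := by
  have hgrid (k : Fin (m + 1)) : (k : ℕ) * d < n :=
    (Nat.mul_le_mul_right d (Nat.lt_succ_iff.mp k.2)).trans_lt hmd
  let g (k : Fin (m + 1)) : β := f ⟨k * d, hgrid k⟩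
  have hg : StrictAnti g := by
    intro a b hab
    have hstep : (a : ℕ) * d + d ≤ b * d := by
      rw [← Nat.succ_mul]; exact Nat.mul_le_mul_right d hab
    exact hf.lt_of_le_of_le_of_ne (b := ⟨a * d + d, hstep.trans_lt (hgrid b)⟩)
      (Fin.mk_le_mk.2 (Nat.le_add_right _ _)) (Fin.mk_le_mk.2 hstep) (hne _ _)
  simpa using card_le_card_of_injOn (s := univ) g (fun k _ => mem_image_of_mem f (mem_univ _))
    hg.injective.injOn

theorem pigeonhole_scoring_vector (x : ℕ)
    (α : Fin (x * (x + 1)) → ℕ) (hα : Antitone α) :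
    x ≤ (Finset.univ.image α).card ∨
      ∃ i : ℕ, ∃ h : i + x < x * (x + 1),
        α ⟨i, by omega⟩ = α ⟨i + x, h⟩ := by
  rcases Nat.eq_zero_or_pos x with rfl | hpos
  · exact Or.inl (Nat.zero_le _)
  by_contra! h
  have := hα.succ_le_card_image_of_ne_add (Nat.mul_lt_mul_of_pos_left x.lt_succ_self hpos) h.2
  omega
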